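/- arXiv:1007.5442 — 9 statements merged into one kernel-verified Lean document; each statement's English description precedes it below -/
import Mathlib

section
/- Dominance is transitive on the Sugeno-Weber family: for all real numbers a, b, c ∈ (0,∞), if the Sugeno-Weber t-norm T_a dominates T_b and T_b dominates T_c, then T_a dominates T_c. -/
/-!
In the dual coordinates `p = 1 - x`, `T_l` becomes the truncated t-conorm
`min 1 (p + q + (l - 1) p q)`, and away from the truncation the domination defect of `T_a` over
`T_c` at `(p, q, r, t)` factors as `(c - a) (q r + p t - (a - 1)(c - 1) p q r t)`.
Hence `T_a ≫ T_c` forces `a ≤ c` (look at `(e, 0, 0, e)` for small `e`) and, when `1 ≤ a < c`,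
the bound `(a - 1)(c - 1) w² ≤ 2` on the untruncated part of the diagonal `p = q = r = t = w`.
Rescaling `w` carries this diagonal bound from `(b, c)` to `(a, c)` when `1 < a ≤ b`, and the
diagonal bound implies domination: `w ↦ 2 w + (a - 1) w²` is log-concave along geometric means,
so passing from `(p, r)`, `(q, t)` to their geometric means and then to the geometric mean `w`
of all four stays in the untruncated region, where `(a - 1)(c - 1) w⁴ ≤ 2 w² ≤ q r + p t`.
For `a ≤ 1` the defect has the right sign outright.
-/

open Set

/-- The Sugeno-Weber t-norm with parameter `l`. -/
noncomputable def TSW (l : ℝ) (u v : ℝ) : ℝ :=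
  max 0 ((1 - l) * u * v + l * (u + v - 1))

/-- `T₁` dominates `T₂` (on the unit interval). -/
def Dominates (T₁ T₂ : ℝ → ℝ → ℝ) : Prop :=
  ∀ x y u v : ℝ, x ∈ Icc (0:ℝ) 1 → y ∈ Icc (0:ℝ) 1 → u ∈ Icc (0:ℝ) 1 → v ∈ Icc (0:ℝ) 1 →
    T₁ (T₂ x y) (T₂ u v) ≥ T₂ (T₁ x u) (T₁ y v)

/-- The Sugeno-Weber t-conorm dual to `TSW (A + 1)`, before truncation at `1`. -/
def swSum (A p q : ℝ) : ℝ := p + q + A * p * q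

noncomputable def swConorm (A p q : ℝ) : ℝ := min 1 (swSum A p q)

lemma TSW_eq (l u v : ℝ) : TSW l u v = 1 - swConorm (l - 1) (1 - u) (1 - v) := by
  rw [swConorm, ← max_sub_sub_left, sub_self, TSW, swSum]
  ring_nf

lemma dominates_TSW_iff {a c : ℝ} :
    Dominates (TSW a) (TSW c) ↔ ∀ p q r t : ℝ, p ∈ Icc (0:ℝ) 1 → q ∈ Icc (0:ℝ) 1 →
      r ∈ Icc (0:ℝ) 1 → t ∈ Icc (0:ℝ) 1 →
      swConorm (a - 1) (swConorm (c - 1) p q) (swConorm (c - 1) r t) ≤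
        swConorm (c - 1) (swConorm (a - 1) p r) (swConorm (a - 1) q t) := by
  have hmem : ∀ z : ℝ, z ∈ Icc (0:ℝ) 1 → 1 - z ∈ Icc (0:ℝ) 1 :=
    fun z hz => ⟨by linarith [hz.2], by linarith [hz.1]⟩
  constructor
  · intro h p q r t hp hq hr ht
    have := h (1 - p) (1 - q) (1 - r) (1 - t) (hmem p hp) (hmem q hq) (hmem r hr) (hmem t ht)
    simp only [TSW_eq, sub_sub_cancel] at this
    linarith
  · intro h x y u v hx hy hu hv
    have := h (1 - x) (1 - y) (1 - u) (1 - v) (hmem x hx) (hmem y hy) (hmem u hu) (hmem v hv)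
    simp only [TSW_eq, sub_sub_cancel]
    linarith

lemma swSum_swSum_sub_swSum_swSum (A C p q r t : ℝ) :
    swSum C (swSum A p r) (swSum A q t) - swSum A (swSum C p q) (swSum C r t) =
      (C - A) * (q * r + p * t - A * C * (p * q * r * t)) := by
  simp only [swSum]
  ring

lemma swSum_comm (A p q : ℝ) : swSum A p q = swSum A q p := by
  unfold swSum; ring

lemma swConorm_comm (A p q : ℝ) : swConorm A p q = swConorm A q p := by
  rw [swConorm, swSum_comm, swConorm]

lemma le_swSum_left {A p q : ℝ} (hA : -1 ≤ A) (hp : p ∈ Icc (0:ℝ) 1) (hq : 0 ≤ q) :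
    p ≤ swSum A p q := by
  unfold swSum
  nlinarith [mul_nonneg hq (by nlinarith [hp.1, hp.2] : (0:ℝ) ≤ 1 + A * p)]

lemma swSum_le_swSum {A p q p' q' : ℝ} (hA : -1 ≤ A)
    (hp : 0 ≤ p) (hpp' : p ≤ p') (hp' : p' ≤ 1)
    (hq : 0 ≤ q) (hqq' : q ≤ q') (hq' : q' ≤ 1) :
    swSum A p q ≤ swSum A p' q' := by
  unfold swSum
  nlinarith [mul_nonneg (sub_nonneg.2 hpp') (by nlinarith : (0:ℝ) ≤ 1 + A * q),
    mul_nonneg (sub_nonneg.2 hqq') (by nlinarith : (0:ℝ) ≤ 1 + A * p')]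

lemma swSum_diag_le_swSum_diag {A p p' : ℝ} (hA : 0 ≤ A) (hp : 0 ≤ p) (hpp' : p ≤ p') :
    swSum A p p ≤ swSum A p' p' := by
  unfold swSum
  nlinarith [mul_le_mul hpp' hpp' hp (hp.trans hpp')]

lemma swConorm_one_left {A q : ℝ} (hA : -1 ≤ A) (hq : 0 ≤ q) : swConorm A 1 q = 1 :=
  min_eq_left (by unfold swSum; nlinarith)

lemma swSum_sqrt_le (A : ℝ) {p r : ℝ} (hp : 0 ≤ p) (hr : 0 ≤ r) :
    swSum A √(p * r) √(p * r) ≤ swSum A p r := by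
  have hmean := two_mul_le_add_of_sq_le_mul hp hr (Real.sq_sqrt (mul_nonneg hp hr)).le
  have hprod : A * √(p * r) * √(p * r) = A * p * r := by
    rw [mul_assoc, Real.mul_self_sqrt (mul_nonneg hp hr), mul_assoc]
  unfold swSum
  linarith

lemma swSum_diag_sq_le {A g₁ g₂ w : ℝ} (hA : 0 ≤ A) (hg₁ : 0 ≤ g₁) (hg₂ : 0 ≤ g₂)
    (hw : w ^ 2 = g₁ * g₂) :
    swSum A w w ^ 2 ≤ swSum A g₁ g₁ * swSum A g₂ g₂ := by
  have hmean : 2 * w ≤ g₁ + g₂ := two_mul_le_add_of_sq_le_mul hg₁ hg₂ hw.le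
  have hfactor : (2 + A * w) ^ 2 ≤ (2 + A * g₁) * (2 + A * g₂) := by
    nlinarith [mul_le_mul_of_nonneg_left hmean hA,
      mul_le_mul_of_nonneg_left hw.le (sq_nonneg A)]
  calc swSum A w w ^ 2 = w ^ 2 * (2 + A * w) ^ 2 := by unfold swSum; ring
    _ ≤ (g₁ * g₂) * ((2 + A * g₁) * (2 + A * g₂)) := by
        rw [hw]; exact mul_le_mul_of_nonneg_left hfactor (mul_nonneg hg₁ hg₂)
    _ = swSum A g₁ g₁ * swSum A g₂ g₂ := by unfold swSum; ring

/-- The domination inequality of `T_{A+1}` over `T_{C+1}` at the diagonal point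
`x = y = u = v = 1 - w`, where no truncation occurs (see `swSum_swSum_sub_swSum_swSum`). -/
def SWDiagCond (A C : ℝ) : Prop :=
  ∀ w : ℝ, 0 ≤ w → swSum C (swSum A w w) (swSum A w w) < 1 → A * C * w ^ 2 ≤ 2

lemma SWDiagCond.mono_left {A B C : ℝ} (hA : 0 < A) (hAB : A ≤ B) (hC : 0 ≤ C)
    (h : SWDiagCond B C) : SWDiagCond A C := by
  intro w hw hlt
  have hB : 0 < B := hA.trans_le hAB
  set s := √(A / B)
  have hs : 0 ≤ s := Real.sqrt_nonneg _
  have hs1 : s ≤ 1 := Real.sqrt_le_one.2 ((div_le_one hB).2 hAB)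
  have hscale : B * (s * w) ^ 2 = A * w ^ 2 := by
    rw [mul_pow, Real.sq_sqrt (div_nonneg hA.le hB.le)]
    field_simp
  have hsw : s * w ≤ w := mul_le_of_le_one_left hw hs1
  have hdiag : swSum B (s * w) (s * w) ≤ swSum A w w := by
    have : swSum B (s * w) (s * w) = 2 * (s * w) + A * w ^ 2 := by
      rw [← hscale]; unfold swSum; ring
    rw [this]; unfold swSum; nlinarith
  have hB0 : 0 ≤ swSum B (s * w) (s * w) := by unfold swSum; positivity
  have := h (s * w) (mul_nonneg hs hw)
    ((swSum_diag_le_swSum_diag hC hB0 hdiag).trans_lt hlt)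
  calc A * C * w ^ 2 = B * C * (s * w) ^ 2 := by rw [mul_right_comm, ← hscale]; ring
    _ ≤ 2 := this

lemma mul_prod_le_add_of_nonpos {A C p q r t : ℝ} (hA : -1 ≤ A) (hA0 : A ≤ 0) (hC : -1 ≤ C)
    (hp : p ∈ Icc (0:ℝ) 1) (hq : 0 ≤ q) (hr : 0 ≤ r) (ht : t ∈ Icc (0:ℝ) 1) :
    A * C * (p * q * r * t) ≤ q * r + p * t := by
  have hqr : 0 ≤ q * r := mul_nonneg hq hr
  have hpt : 0 ≤ p * t := mul_nonneg hp.1 ht.1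
  have hpt1 : p * t ≤ 1 := mul_le_one₀ hp.2 ht.1 ht.2
  have hAC : A * C ≤ 1 := by
    rcases le_or_gt 0 C with hC0 | hC0
    · nlinarith
    · nlinarith [mul_le_mul_of_nonpos_left hC hA0]
  calc A * C * (p * q * r * t) = A * C * ((q * r) * (p * t)) := by ring
    _ ≤ 1 * ((q * r) * (p * t)) := mul_le_mul_of_nonneg_right hAC (mul_nonneg hqr hpt)
    _ ≤ q * r := by rw [one_mul]; exact mul_le_of_le_one_right hqr hpt1
    _ ≤ q * r + p * t := le_add_of_nonneg_right hpt

lemma mul_prod_le_add_of_swDiagCond {A C p q r t : ℝ} (hA : 0 ≤ A) (hC : 0 ≤ C)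
    (h : SWDiagCond A C) (hp : 0 ≤ p) (hq : 0 ≤ q) (hr : 0 ≤ r) (ht : 0 ≤ t)
    (hlt : swSum C (swSum A p r) (swSum A q t) < 1) :
    A * C * (p * q * r * t) ≤ q * r + p * t := by
  set g₁ := √(p * r)
  set g₂ := √(q * t)
  set w := √(g₁ * g₂)
  have hg₁ : 0 ≤ g₁ := Real.sqrt_nonneg _
  have hg₂ : 0 ≤ g₂ := Real.sqrt_nonneg _
  have hw : 0 ≤ w := Real.sqrt_nonneg _
  have hw2 : w ^ 2 = g₁ * g₂ := Real.sq_sqrt (mul_nonneg hg₁ hg₂)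
  have hw4 : (w ^ 2) ^ 2 = (q * r) * (p * t) := by
    rw [hw2, mul_pow, Real.sq_sqrt (mul_nonneg hp hr), Real.sq_sqrt (mul_nonneg hq ht)]; ring
  set ρ₁ := swSum A p r
  set ρ₂ := swSum A q t
  set ρ := swSum A w w
  have hρ₁ : swSum A g₁ g₁ ≤ ρ₁ := swSum_sqrt_le A hp hr
  have hρ₂ : swSum A g₂ g₂ ≤ ρ₂ := swSum_sqrt_le A hq ht
  have hg₂0 : 0 ≤ swSum A g₂ g₂ := by unfold swSum; positivity
  have hρ₁0 : 0 ≤ ρ₁ := le_trans (by unfold swSum; positivity) hρ₁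
  have hρ₂0 : 0 ≤ ρ₂ := hg₂0.trans hρ₂
  have hρsq : ρ ^ 2 ≤ ρ₁ * ρ₂ :=
    (swSum_diag_sq_le hA hg₁ hg₂ hw2).trans (mul_le_mul hρ₁ hρ₂ hg₂0 hρ₁0)
  have hρ : 2 * ρ ≤ ρ₁ + ρ₂ := two_mul_le_add_of_sq_le_mul hρ₁0 hρ₂0 hρsq
  have hdiag : swSum C ρ ρ < 1 := by
    refine lt_of_le_of_lt ?_ hlt
    unfold swSum
    nlinarith [mul_le_mul_of_nonneg_left hρsq hC]
  have hbound := h w hw hdiag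
  have hmean : 2 * w ^ 2 ≤ q * r + p * t :=
    two_mul_le_add_of_sq_le_mul (mul_nonneg hq hr) (mul_nonneg hp ht) hw4.le
  calc A * C * (p * q * r * t) = (A * C * w ^ 2) * w ^ 2 := by
        rw [show p * q * r * t = q * r * (p * t) by ring, ← hw4]; ring
    _ ≤ 2 * w ^ 2 := mul_le_mul_of_nonneg_right hbound (sq_nonneg w)
    _ ≤ q * r + p * t := hmean

lemma swConorm_dominance_of_mul_prod_le_add {A C p q r t : ℝ} (hA : -1 ≤ A) (hAC : A ≤ C)
    (hp : p ∈ Icc (0:ℝ) 1) (hq : q ∈ Icc (0:ℝ) 1) (hr : r ∈ Icc (0:ℝ) 1)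
    (ht : t ∈ Icc (0:ℝ) 1)
    (key : swSum C (swSum A p r) (swSum A q t) < 1 →
      A * C * (p * q * r * t) ≤ q * r + p * t) :
    swConorm A (swConorm C p q) (swConorm C r t) ≤
      swConorm C (swConorm A p r) (swConorm A q t) := by
  have hC : -1 ≤ C := hA.trans hAC
  set ρ₁ := swSum A p r
  set ρ₂ := swSum A q t
  have hpρ₁ : p ≤ ρ₁ := le_swSum_left hA hp hr.1
  have hqρ₂ : q ≤ ρ₂ := le_swSum_left hA hq ht.1
  have hrρ₁ : r ≤ ρ₁ := (le_swSum_left hA hr hp.1).trans_eq (swSum_comm A r p)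
  have htρ₂ : t ≤ ρ₂ := (le_swSum_left hA ht hq.1).trans_eq (swSum_comm A t q)
  have hρ₁0 : 0 ≤ swConorm A p r := le_min zero_le_one (hp.1.trans hpρ₁)
  have hρ₂0 : 0 ≤ swConorm A q t := le_min zero_le_one (hq.1.trans hqρ₂)
  rcases le_or_gt 1 ρ₁ with hρ₁ | hρ₁
  · rw [show swConorm A p r = 1 from min_eq_left hρ₁, swConorm_one_left hC hρ₂0]
    exact min_le_left _ _
  rcases le_or_gt 1 ρ₂ with hρ₂ | hρ₂
  · rw [show swConorm A q t = 1 from min_eq_left hρ₂, swConorm_comm C _ 1,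
      swConorm_one_left hC hρ₁0]
    exact min_le_left _ _
  rw [show swConorm A p r = ρ₁ from min_eq_right hρ₁.le,
    show swConorm A q t = ρ₂ from min_eq_right hρ₂.le]
  rcases le_or_gt 1 (swSum C ρ₁ ρ₂) with hD | hD
  · rw [show swConorm C ρ₁ ρ₂ = 1 from min_eq_left hD]
    exact min_le_left _ _
  have hpq : swSum C p q < 1 :=
    (swSum_le_swSum hC hp.1 hpρ₁ hρ₁.le hq.1 hqρ₂ hρ₂.le).trans_lt hD
  have hrt : swSum C r t < 1 :=
    (swSum_le_swSum hC hr.1 hrρ₁ hρ₁.le ht.1 htρ₂ hρ₂.le).trans_lt hD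
  rw [show swConorm C p q = swSum C p q from min_eq_right hpq.le,
    show swConorm C r t = swSum C r t from min_eq_right hrt.le,
    show swConorm C ρ₁ ρ₂ = swSum C ρ₁ ρ₂ from min_eq_right hD.le]
  have hdefect := swSum_swSum_sub_swSum_swSum A C p q r t
  refine (min_le_right _ _).trans ?_
  nlinarith [mul_nonneg (sub_nonneg.2 hAC) (sub_nonneg.2 (key hD))]

lemma le_of_dominates_TSW {a b : ℝ} (h : Dominates (TSW a) (TSW b)) : a ≤ b := by
  set e := 1 / (|b - 1| + 3)
  have he : 0 < e := by positivity
  have hscale : e * (|b - 1| + 3) = 1 := one_div_mul_cancel (by positivity)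
  have he1 : e ≤ 1 := by nlinarith [abs_nonneg (b - 1)]
  have hsmall : swSum (b - 1) e e < 1 := by
    have habs : (b - 1) * e * e ≤ |b - 1| * e * e :=
      mul_le_mul_of_nonneg_right (mul_le_mul_of_nonneg_right (le_abs_self _) he.le) he.le
    have hcube : |b - 1| * e * e = e - 3 * e * e := by linear_combination e * hscale
    unfold swSum
    nlinarith [mul_pos he he]
  have hedge : ∀ A, swConorm A e 0 = e ∧ swConorm A 0 e = e := fun A => by
    simp only [swConorm, swSum]; constructor <;> simpa using he1
  have hdom := dominates_TSW_iff.mp h e 0 0 e ⟨he.le, he1⟩ ⟨le_rfl, zero_le_one⟩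
    ⟨le_rfl, zero_le_one⟩ ⟨he.le, he1⟩
  rw [(hedge _).1, (hedge _).2, (hedge _).1, (hedge _).2,
    show swConorm (b - 1) e e = swSum (b - 1) e e from min_eq_right hsmall.le] at hdom
  have hle := (min_le_iff.mp hdom).resolve_left (not_le.mpr hsmall)
  unfold swSum at hle
  nlinarith [mul_pos he he]

lemma swDiagCond_of_dominates {b c : ℝ} (hb : 1 ≤ b) (hbc : b < c)
    (h : Dominates (TSW b) (TSW c)) : SWDiagCond (b - 1) (c - 1) := by
  intro w hw hlt
  have hC : 0 ≤ c - 1 := by linarith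
  set ρ := swSum (b - 1) w w
  have hwρ : w ≤ ρ := by
    unfold ρ swSum; nlinarith [mul_nonneg (sub_nonneg.2 hb) (mul_nonneg hw hw)]
  have hρ1 : ρ < 1 := by
    refine lt_of_le_of_lt ?_ hlt
    unfold swSum; nlinarith [mul_nonneg hC (mul_nonneg (hw.trans hwρ) (hw.trans hwρ))]
  have hσ : swSum (c - 1) w w < 1 := (swSum_diag_le_swSum_diag hC hw hwρ).trans_lt hlt
  have hw1 : w ∈ Icc (0:ℝ) 1 := ⟨hw, by linarith⟩
  have hdom := dominates_TSW_iff.mp h w w w w hw1 hw1 hw1 hw1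
  rw [show swConorm (c - 1) w w = swSum (c - 1) w w from min_eq_right hσ.le,
    show swConorm (b - 1) w w = ρ from min_eq_right hρ1.le,
    show swConorm (c - 1) ρ ρ = swSum (c - 1) ρ ρ from min_eq_right hlt.le] at hdom
  have hle := (min_le_iff.mp hdom).resolve_left (not_le.mpr hlt)
  have hdefect := swSum_swSum_sub_swSum_swSum (b - 1) (c - 1) w w w w
  have hquartic : 0 ≤ w * w + w * w - (b - 1) * (c - 1) * (w * w * w * w) :=
    nonneg_of_mul_nonneg_right (by linarith) (by linarith : (0:ℝ) < c - 1 - (b - 1))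
  rcases hw.eq_or_lt with rfl | hw0
  · norm_num
  nlinarith [mul_pos hw0 hw0]

theorem sugeno_weber_dominance_trans_general (a b c : ℝ) (ha : 0 < a)
    (hab : Dominates (TSW a) (TSW b)) (hbc : Dominates (TSW b) (TSW c)) :
    Dominates (TSW a) (TSW c) := by
  have hab_le := le_of_dominates_TSW hab
  have hbc_le := le_of_dominates_TSW hbc
  rcases hbc_le.eq_or_lt with rfl | hbc_lt
  · exact hab
  rw [dominates_TSW_iff]
  intro p q r t hp hq hr ht
  refine swConorm_dominance_of_mul_prod_le_add (by linarith) (by linarith) hp hq hr ht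
    fun hlt => ?_
  rcases le_or_gt a 1 with ha1 | ha1
  · exact mul_prod_le_add_of_nonpos (by linarith) (by linarith) (by linarith) hp hq.1 hr.1 ht
  · have hdiag_bc := swDiagCond_of_dominates (ha1.trans_le hab_le).le hbc_lt hbc
    have hdiag_ac := hdiag_bc.mono_left (A := a - 1) (by linarith) (by linarith) (by linarith)
    exact mul_prod_le_add_of_swDiagCond (by linarith) (by linarith) hdiag_ac hp.1 hq.1 hr.1 ht.1 hlt

theorem sugeno_weber_dominance_trans (a b c : ℝ) (ha : 0 < a) (hb : 0 < b) (hc : 0 < c)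
    (hab : Dominates (TSW a) (TSW b)) (hbc : Dominates (TSW b) (TSW c)) :
    Dominates (TSW a) (TSW c) :=
  sugeno_weber_dominance_trans_general a b c ha hab hbc
end

section
/- The product t-norm dominates every Sugeno-Weber t-norm: for every real μ ∈ (0,∞) and all x, y, u, v ∈ [0,1], one has T_μ(x,y) · T_μ(u,v) ≥ T_μ(x·u, y·v). -/
open Set

/-!
Write `T_μ(s, t) = max 0 (f s t)` with `f s t = s t - μ (1 - s)(1 - t)`. On the unit square `f` is
monotone in each variable, so `f (x u) (y v)` is bounded by both `f x y` and `f u v`: if either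
factor `T_μ(x, y)`, `T_μ(u, v)` vanishes, so does `T_μ(x u, y v)`. Otherwise both factors equal
their polynomials, and `f x y * f u v - f (x u) (y v)` is a polynomial in `μ`, `x, y, u, v` and
`1 - x, …, 1 - v` with nonnegative coefficients.
-/

def swPoly (l s t : ℝ) : ℝ :=
  (1 - l) * s * t + l * (s + t - 1)

theorem TSW_eq_max_swPoly (l s t : ℝ) : TSW l s t = max 0 (swPoly l s t) := rfl

theorem swPoly_comm (l s t : ℝ) : swPoly l s t = swPoly l t s := by
  unfold swPoly; ring

theorem swPoly_mono_left {l s s' t : ℝ} (hl : 0 ≤ l) (ht : t ∈ Icc (0:ℝ) 1) (hs : s ≤ s') :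
    swPoly l s t ≤ swPoly l s' t := by
  have hslope : 0 ≤ t + l * (1 - t) := add_nonneg ht.1 (mul_nonneg hl (sub_nonneg.mpr ht.2))
  have hdiff : swPoly l s' t - swPoly l s t = (s' - s) * (t + l * (1 - t)) := by
    unfold swPoly; ring
  rw [← sub_nonneg, hdiff]
  exact mul_nonneg (sub_nonneg.mpr hs) hslope

theorem swPoly_mono {l s s' t t' : ℝ} (hl : 0 ≤ l) (hs' : s' ∈ Icc (0:ℝ) 1)
    (ht : t ∈ Icc (0:ℝ) 1) (hs : s ≤ s') (htt' : t ≤ t') :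
    swPoly l s t ≤ swPoly l s' t' :=
  calc swPoly l s t ≤ swPoly l s' t := swPoly_mono_left hl ht hs
    _ = swPoly l t s' := swPoly_comm l s' t
    _ ≤ swPoly l t' s' := swPoly_mono_left hl hs' htt'
    _ = swPoly l s' t' := swPoly_comm l t' s'

theorem swPoly_mul_le {l x y u v : ℝ} (hl : 0 ≤ l) (hx : x ∈ Icc (0:ℝ) 1)
    (hy : y ∈ Icc (0:ℝ) 1) (hu : u ∈ Icc (0:ℝ) 1) (hv : v ∈ Icc (0:ℝ) 1) :
    swPoly l (x * u) (y * v) ≤ swPoly l x y :=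
  swPoly_mono hl hx ⟨mul_nonneg hy.1 hv.1, mul_le_one₀ hy.2 hv.1 hv.2⟩
    (mul_le_of_le_one_right hx.1 hu.2) (mul_le_of_le_one_right hy.1 hv.2)

theorem swPoly_mul_sub_swPoly_mul (l x y u v : ℝ) :
    swPoly l x y * swPoly l u v - swPoly l (x * u) (y * v) =
      l * ((1 - x) * (1 - y) * (1 - u * v) + (1 - x) * y * (1 - v) + x * (1 - u) * (1 - y)) +
        l ^ 2 * ((1 - x) * (1 - y) * (1 - u) * (1 - v)) := by
  unfold swPoly; ring

theorem swPoly_mul_le_mul {l x y u v : ℝ} (hl : 0 ≤ l) (hx : x ∈ Icc (0:ℝ) 1)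
    (hy : y ∈ Icc (0:ℝ) 1) (hu : u ∈ Icc (0:ℝ) 1) (hv : v ∈ Icc (0:ℝ) 1) :
    swPoly l (x * u) (y * v) ≤ swPoly l x y * swPoly l u v := by
  obtain ⟨hx0, hx1⟩ := hx
  obtain ⟨hy0, hy1⟩ := hy
  obtain ⟨hu0, hu1⟩ := hu
  obtain ⟨hv0, hv1⟩ := hv
  have hx' : 0 ≤ 1 - x := sub_nonneg.mpr hx1
  have hy' : 0 ≤ 1 - y := sub_nonneg.mpr hy1
  have hu' : 0 ≤ 1 - u := sub_nonneg.mpr hu1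
  have hv' : 0 ≤ 1 - v := sub_nonneg.mpr hv1
  have huv' : 0 ≤ 1 - u * v := sub_nonneg.mpr (mul_le_one₀ hu1 hv0 hv1)
  rw [← sub_nonneg, swPoly_mul_sub_swPoly_mul]
  positivity

theorem product_dominates_sugeno_weber (m : ℝ) (hm : 0 < m)
    (x y u v : ℝ) (hx : x ∈ Icc (0:ℝ) 1) (hy : y ∈ Icc (0:ℝ) 1)
    (hu : u ∈ Icc (0:ℝ) 1) (hv : v ∈ Icc (0:ℝ) 1) :
    TSW m x y * TSW m u v ≥ TSW m (x * u) (y * v) := by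
  have hle_left := swPoly_mul_le hm.le hx hy hu hv
  have hle_right : swPoly m (x * u) (y * v) ≤ swPoly m u v := by
    rw [mul_comm x, mul_comm y]
    exact swPoly_mul_le hm.le hu hv hx hy
  simp only [ge_iff_le, TSW_eq_max_swPoly]
  refine max_le (by positivity) ?_
  rcases le_or_gt (swPoly m x y) 0 with hxy | hxy
  · exact (hle_left.trans hxy).trans (by positivity)
  rcases le_or_gt (swPoly m u v) 0 with huv | huv
  · exact (hle_right.trans huv).trans (by positivity)
  rw [max_eq_right hxy.le, max_eq_right huv.le]
  exact swPoly_mul_le_mul hm.le hx hy hu hv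
end

section
/- For every real λ ∈ (0,∞), the map T_λ(u,v) = max(0, (1−λ)uv + λ(u+v−1)) is a t-norm on [0,1]: it maps [0,1]² into [0,1], is commutative, associative, nondecreasing in each argument, and has 1 as neutral element. -/
/-!
With `P(u,v) = (1-λ)uv + λ(u+v-1)` we have `T_λ = max 0 P`, and `φ(P(u,v)) = φ(u) φ(v)` for
`φ x = (1-λ)x + λ`, so `P` is associative. For `λ ≥ 0` and `w ∈ [0,1]`, `P(·,w)` is nondecreasing
and `P(0,w) ≤ 0`; hence `T_λ(max 0 y, w) = max 0 (P(y,w))`, i.e. the inner truncation can be dropped,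
and associativity passes from `P` to `T_λ`.
-/

open Set

def tswPoly (l u v : ℝ) : ℝ :=
  (1 - l) * u * v + l * (u + v - 1)

lemma TSW_eq_max_tswPoly (l u v : ℝ) : TSW l u v = max 0 (tswPoly l u v) := rfl

lemma tswPoly_comm (l u v : ℝ) : tswPoly l u v = tswPoly l v u := by
  unfold tswPoly; ring

lemma tswPoly_assoc (l u v w : ℝ) :
    tswPoly l (tswPoly l u v) w = tswPoly l u (tswPoly l v w) := by
  unfold tswPoly; ring

lemma tswPoly_mono_left {l v : ℝ} (hl : 0 ≤ l) (hv : v ∈ Icc (0:ℝ) 1) {u u' : ℝ}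
    (huu' : u ≤ u') : tswPoly l u v ≤ tswPoly l u' v := by
  obtain ⟨hv0, hv1⟩ := hv
  have hslope : 0 ≤ v + l * (1 - v) := add_nonneg hv0 (mul_nonneg hl (sub_nonneg.2 hv1))
  have hdiff : tswPoly l u' v - tswPoly l u v = (u' - u) * (v + l * (1 - v)) := by
    unfold tswPoly; ring
  linarith [mul_nonneg (sub_nonneg.2 huu') hslope]

lemma TSW_comm (l u v : ℝ) : TSW l u v = TSW l v u := by
  rw [TSW_eq_max_tswPoly, tswPoly_comm, ← TSW_eq_max_tswPoly]

lemma TSW_one_right (l : ℝ) {u : ℝ} (hu : 0 ≤ u) : TSW l u 1 = u := by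
  unfold TSW; ring_nf; exact max_eq_right hu

lemma TSW_mem_Icc {l u v : ℝ} (hl : 0 ≤ l) (hu : u ∈ Icc (0:ℝ) 1) (hv : v ∈ Icc (0:ℝ) 1) :
    TSW l u v ∈ Icc (0:ℝ) 1 := by
  obtain ⟨hu0, hu1⟩ := hu
  obtain ⟨hv0, hv1⟩ := hv
  refine ⟨le_max_left _ _, max_le zero_le_one ?_⟩
  have hform : (1 - l) * u * v + l * (u + v - 1) = u * v - l * ((1 - u) * (1 - v)) := by ring
  rw [hform]
  nlinarith [mul_nonneg (sub_nonneg.2 hu1) (sub_nonneg.2 hv1), mul_le_one₀ hu1 hv0 hv1]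

lemma TSW_mono_left {l v : ℝ} (hl : 0 ≤ l) (hv : v ∈ Icc (0:ℝ) 1) {u u' : ℝ} (huu' : u ≤ u') :
    TSW l u v ≤ TSW l u' v :=
  max_le_max le_rfl (tswPoly_mono_left hl hv huu')

lemma TSW_mono_right {l u : ℝ} (hl : 0 ≤ l) (hu : u ∈ Icc (0:ℝ) 1) {v v' : ℝ} (hvv' : v ≤ v') :
    TSW l u v ≤ TSW l u v' := by
  rw [TSW_comm l u v, TSW_comm l u v']
  exact TSW_mono_left hl hu hvv'

lemma TSW_max_zero_left {l w : ℝ} (hl : 0 ≤ l) (hw : w ∈ Icc (0:ℝ) 1) (y : ℝ) :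
    TSW l (max 0 y) w = max 0 (tswPoly l y w) := by
  rcases le_total 0 y with hy | hy
  · rw [max_eq_right hy, TSW_eq_max_tswPoly]
  · have hzero : tswPoly l 0 w ≤ 0 := by
      have : tswPoly l 0 w = l * (w - 1) := by unfold tswPoly; ring
      rw [this]
      exact mul_nonpos_of_nonneg_of_nonpos hl (sub_nonpos.2 hw.2)
    rw [max_eq_left hy, TSW_eq_max_tswPoly, max_eq_left hzero,
      max_eq_left ((tswPoly_mono_left hl hw hy).trans hzero)]

lemma TSW_assoc {l u v w : ℝ} (hl : 0 ≤ l) (hu : u ∈ Icc (0:ℝ) 1) (hw : w ∈ Icc (0:ℝ) 1) :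
    TSW l (TSW l u v) w = TSW l u (TSW l v w) := by
  rw [TSW_comm l u (TSW l v w), TSW_eq_max_tswPoly l u v, TSW_eq_max_tswPoly l v w,
    TSW_max_zero_left hl hw, TSW_max_zero_left hl hu, tswPoly_assoc,
    tswPoly_comm l (tswPoly l v w)]

theorem sugeno_weber_is_tnorm (l : ℝ) (hl : 0 < l) :
    (∀ u v, u ∈ Icc (0:ℝ) 1 → v ∈ Icc (0:ℝ) 1 → TSW l u v ∈ Icc (0:ℝ) 1) ∧
    (∀ u v, TSW l u v = TSW l v u) ∧
    (∀ u v w, u ∈ Icc (0:ℝ) 1 → v ∈ Icc (0:ℝ) 1 → w ∈ Icc (0:ℝ) 1 →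
      TSW l (TSW l u v) w = TSW l u (TSW l v w)) ∧
    (∀ u u' v, u ∈ Icc (0:ℝ) 1 → u' ∈ Icc (0:ℝ) 1 → v ∈ Icc (0:ℝ) 1 →
      u ≤ u' → TSW l u v ≤ TSW l u' v) ∧
    (∀ u v v', u ∈ Icc (0:ℝ) 1 → v ∈ Icc (0:ℝ) 1 → v' ∈ Icc (0:ℝ) 1 →
      v ≤ v' → TSW l u v ≤ TSW l u v') ∧
    (∀ u, u ∈ Icc (0:ℝ) 1 → TSW l u 1 = u) :=
  ⟨fun _ _ hu hv => TSW_mem_Icc hl.le hu hv,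
    TSW_comm l,
    fun _ _ _ hu _ hw => TSW_assoc hl.le hu hw,
    fun _ _ _ _ _ hv huu' => TSW_mono_left hl.le hv huu',
    fun _ _ _ hu _ _ hvv' => TSW_mono_right hl.le hu hvv',
    fun _ hu => TSW_one_right l hu.1⟩
end

section
/- The Sugeno-Weber family is decreasing in its parameter: for all real λ, μ ∈ (0,∞), one has T_λ(u,v) ≥ T_μ(u,v) for all u, v ∈ [0,1] if and only if λ ≤ μ. -/
open Set

/-!
Rewriting `T_λ(u,v) = max(0, uv - λ(1-u)(1-v))` shows that `T_λ(u,v)` is antitone in `λ`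
whenever `u, v ≤ 1`. Conversely, `T_μ(t,t)` is positive for `t < 1` close to `1`, and at such a
point the factor `(1-t)²` is positive, so `T_λ(t,t) < T_μ(t,t)` for every `λ > μ`.
-/

open Filter Topology

theorem TSW_eq_max_sub (l u v : ℝ) :
    TSW l u v = max 0 (u * v - l * ((1 - u) * (1 - v))) := by
  unfold TSW
  ring_nf

theorem TSW_antitone_param {u v : ℝ} (hu : u ≤ 1) (hv : v ≤ 1) :
    Antitone fun l => TSW l u v := by
  intro l m hlm
  simp only [TSW_eq_max_sub]
  have hprod : 0 ≤ (1 - u) * (1 - v) := mul_nonneg (sub_nonneg.2 hu) (sub_nonneg.2 hv)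
  gcongr

theorem TSW_lt_of_lt_param {l m u v : ℝ} (hml : m < l) (hu : u < 1) (hv : v < 1)
    (hpos : 0 < TSW m u v) : TSW l u v < TSW m u v := by
  simp only [TSW_eq_max_sub] at hpos ⊢
  have hinner : 0 < u * v - m * ((1 - u) * (1 - v)) := by
    simpa only [lt_max_iff, lt_irrefl, false_or] using hpos
  have hprod : 0 < (1 - u) * (1 - v) := mul_pos (sub_pos.2 hu) (sub_pos.2 hv)
  have hlt : u * v - l * ((1 - u) * (1 - v)) < u * v - m * ((1 - u) * (1 - v)) := by
    gcongr
  exact (max_lt hinner hlt).trans_le (le_max_right _ _)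

theorem exists_mem_Ico_TSW_diag_pos (m : ℝ) : ∃ t ∈ Ico (0 : ℝ) 1, 0 < TSW m t t := by
  have hcont : Continuous fun t => TSW m t t := by
    unfold TSW
    fun_prop
  have hone : 0 < TSW m 1 1 := by norm_num [TSW]
  have hnear : ∀ᶠ t in 𝓝[<] (1 : ℝ), 0 < TSW m t t :=
    nhdsWithin_le_nhds (continuousAt_const.eventually_lt hcont.continuousAt hone)
  have hIco : ∀ᶠ t in 𝓝[<] (1 : ℝ), t ∈ Ico (0 : ℝ) 1 := Ico_mem_nhdsLT zero_lt_one
  exact (hIco.and hnear).exists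

theorem sugeno_weber_decreasing_in_parameter_general (l m : ℝ) :
    (∀ u v : ℝ, u ∈ Icc (0:ℝ) 1 → v ∈ Icc (0:ℝ) 1 → TSW l u v ≥ TSW m u v) ↔ l ≤ m := by
  refine ⟨fun hdom => ?_, fun hlm u v hu hv => TSW_antitone_param hu.2 hv.2 hlm⟩
  by_contra! hml
  obtain ⟨t, ht, hpos⟩ := exists_mem_Ico_TSW_diag_pos m
  have htI : t ∈ Icc (0 : ℝ) 1 := Ico_subset_Icc_self ht
  exact (TSW_lt_of_lt_param hml ht.2 ht.2 hpos).not_ge (hdom t t htI htI)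

theorem sugeno_weber_decreasing_in_parameter (l m : ℝ) (hl : 0 < l) (hm : 0 < m) :
    (∀ u v : ℝ, u ∈ Icc (0:ℝ) 1 → v ∈ Icc (0:ℝ) 1 → TSW l u v ≥ TSW m u v) ↔ l ≤ m :=
  sugeno_weber_decreasing_in_parameter_general l m
end

section
/- The function f(x) = ((1 − 3√x)/(3 − √x))² is involutive on (9, ∞): for every real x > 9, one has f(x) > 9 and f(f(x)) = x. -/
open Set

/-- The function `f(x) = ((1 - 3√x)/(3 - √x))²`. -/
noncomputable def f (x : ℝ) : ℝ := ((1 - 3 * Real.sqrt x) / (3 - Real.sqrt x)) ^ 2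

/-!
Write `s = √x`. Then `f x = g(s)²` for the Möbius map `g(s) = (1 - 3s)/(3 - s)`, whose matrix
`[[-3, 1], [-1, 3]]` has trace zero, so `g` is an involution; moreover `g` maps `(3, ∞)` into itself.
Hence `√(f x) = g(s)` and `f (f x) = g(g(s))² = s² = x`. The same works with `3` replaced by any `a > 1`.
-/

section Mobius

variable {K : Type*} [Field K]

def involutiveMobius (a s : K) : K := (1 - a * s) / (a - s)

theorem involutiveMobius_sub_self {a s : K} (hs : s ≠ a) :
    involutiveMobius a s - a = (a ^ 2 - 1) / (s - a) := by
  have has : a - s ≠ 0 := sub_ne_zero.2 hs.symm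
  have hsa : s - a ≠ 0 := sub_ne_zero.2 hs
  unfold involutiveMobius
  field_simp
  ring

theorem involutiveMobius_ne_self {a s : K} (ha : a ^ 2 ≠ 1) (hs : s ≠ a) :
    involutiveMobius a s ≠ a := by
  rw [← sub_ne_zero, involutiveMobius_sub_self hs]
  exact div_ne_zero (sub_ne_zero.2 ha) (sub_ne_zero.2 hs)

theorem involutiveMobius_involutive {a s : K} (ha : a ^ 2 ≠ 1) (hs : s ≠ a) :
    involutiveMobius a (involutiveMobius a s) = s := by
  have ht := sub_ne_zero.2 (involutiveMobius_ne_self ha hs).symm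
  have has : a - s ≠ 0 := sub_ne_zero.2 hs.symm
  unfold involutiveMobius at ht ⊢
  rw [div_eq_iff ht]
  field_simp
  ring

end Mobius

theorem lt_involutiveMobius {a s : ℝ} (ha : 1 < a) (hs : a < s) : a < involutiveMobius a s := by
  have h : 0 < involutiveMobius a s - a := by
    rw [involutiveMobius_sub_self hs.ne']
    exact div_pos (by nlinarith) (by linarith)
  linarith

theorem lt_involutiveMobius_sqrt_sq {a x : ℝ} (ha : 1 < a) (hx : a ^ 2 < x) :
    a ^ 2 < involutiveMobius a √x ^ 2 := by
  have hs : a < √x := Real.lt_sqrt (by linarith) |>.2 hx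
  have ht := lt_involutiveMobius ha hs
  nlinarith

theorem involutiveMobius_sqrt_sq_involutive {a x : ℝ} (ha : 1 < a) (hx : a ^ 2 < x) :
    involutiveMobius a √(involutiveMobius a √x ^ 2) ^ 2 = x := by
  have hs : a < √x := Real.lt_sqrt (by linarith) |>.2 hx
  have ht := lt_involutiveMobius ha hs
  rw [Real.sqrt_sq (by linarith), involutiveMobius_involutive (by nlinarith) hs.ne',
    Real.sq_sqrt (by nlinarith)]

theorem f_involutive (x : ℝ) (hx : 9 < x) : f x > 9 ∧ f (f x) = x := by
  have hf : ∀ y, f y = involutiveMobius 3 √y ^ 2 := fun _ => rfl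
  have h9 : (3 : ℝ) ^ 2 = 9 := by norm_num
  have hx' : (3 : ℝ) ^ 2 < x := h9 ▸ hx
  constructor
  · rw [hf, gt_iff_lt, ← h9]
    exact lt_involutiveMobius_sqrt_sq (by norm_num) hx'
  · rw [hf, hf x]
    exact involutiveMobius_sqrt_sq_involutive (by norm_num) hx'
end

section
/- For every real α with 0 < α ≤ 9 and every real β with α ≤ β < ∞, the Sugeno-Weber t-norm T_α dominates the Sugeno-Weber t-norm T_β. -/
/-!
Write `T_l(u, v) = max 0 (F_l(u, v))` with `F_l(u, v) = uv - l(1 - u)(1 - v)`. If the right-hand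
side `T_b(T_a(x, u), T_a(y, v))` is positive, then, `T_a` and `T_b` being monotone and below `min`,
none of the six truncations at `0` is active, and the polynomial identity
`F_a(F_b(x, y), F_b(u, v)) - F_b(F_a(x, u), F_a(y, v)) = (b - a) G` reduces the claim to `G ≥ 0`,
where in the complements `X = 1 - x`, ... one has `G = YU + XV - (a - 1)(b - 1) XYUV`.
For `a ≤ 1` this is immediate. For `a > 1`, positivity of the right-hand side and AM-GM give
`16 b² XYUV < 1`, and together with `(YU + XV)² ≥ 4 XYUV` this yields `G ≥ 0` as soon as
`(a - 1)(b - 1) ≤ 8 b`, which holds for every `b ≥ 1` exactly when `a ≤ 9`.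
-/

open Set

def swRaw (l u v : ℝ) : ℝ := (1 - l) * u * v + l * (u + v - 1)

lemma TSW_eq_max_swRaw (l u v : ℝ) : TSW l u v = max 0 (swRaw l u v) := rfl

lemma swRaw_eq_mul_sub (l u v : ℝ) : swRaw l u v = u * v - l * ((1 - u) * (1 - v)) := by
  unfold swRaw; ring

lemma swRaw_le_mul {l u v : ℝ} (hl : 0 ≤ l) (hu : u ≤ 1) (hv : v ≤ 1) :
    swRaw l u v ≤ u * v := by
  rw [swRaw_eq_mul_sub]
  have := mul_nonneg hl (mul_nonneg (sub_nonneg.2 hu) (sub_nonneg.2 hv))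
  linarith

lemma one_sub_swRaw (l u v : ℝ) :
    1 - swRaw l u v = (1 - u) + (1 - v) + (l - 1) * (1 - u) * (1 - v) := by
  unfold swRaw; ring

lemma swRaw_interchange (a b x y u v : ℝ) :
    swRaw a (swRaw b x y) (swRaw b u v) - swRaw b (swRaw a x u) (swRaw a y v) =
      (b - a) * ((1 - y) * (1 - u) + (1 - x) * (1 - v) -
        (a - 1) * (b - 1) * ((1 - x) * (1 - y) * (1 - u) * (1 - v))) := by
  unfold swRaw; ring

lemma mul_prod_le_add_of_le_one {c x y u v : ℝ} (hc : c ≤ 1)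
    (hx : x ∈ Icc (0:ℝ) 1) (hy : y ∈ Icc (0:ℝ) 1) (hu : u ∈ Icc (0:ℝ) 1) (hv : 0 ≤ v) :
    c * (x * y * u * v) ≤ y * u + x * v := by
  obtain ⟨hx0, hx1⟩ := hx
  obtain ⟨hy0, hy1⟩ := hy
  obtain ⟨hu0, hu1⟩ := hu
  have hxv : 0 ≤ x * v := mul_nonneg hx0 hv
  have hyu : y * u ≤ 1 := mul_le_one₀ hy1 hu0 hu1
  calc c * (x * y * u * v) ≤ 1 * (x * v * (y * u)) := by
        rw [show x * y * u * v = x * v * (y * u) by ring]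
        exact mul_le_mul_of_nonneg_right hc (mul_nonneg hxv (mul_nonneg hy0 hu0))
    _ ≤ x * v := by simpa using mul_le_of_le_one_right hxv hyu
    _ ≤ y * u + x * v := le_add_of_nonneg_left (mul_nonneg hy0 hu0)

lemma mul_prod_le_add_of_mul_lt_one {a b x y u v : ℝ} (ha1 : 1 ≤ a) (ha9 : a ≤ 9)
    (hx : 0 ≤ x) (hy : 0 ≤ y) (hu : 0 ≤ u) (hv : 0 ≤ v)
    (h : b * ((x + u + (a - 1) * x * u) * (y + v + (a - 1) * y * v)) < 1) :
    (a - 1) * (b - 1) * (x * y * u * v) ≤ y * u + x * v := by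
  have hw : 0 ≤ x * y * u * v := by positivity
  have hs : 0 ≤ y * u + x * v := by positivity
  rcases le_or_gt b 1 with hb1 | hb1
  · have : (a - 1) * (b - 1) ≤ 0 := mul_nonpos_of_nonneg_of_nonpos (by linarith) (by linarith)
    nlinarith
  have hsum : b * ((x + u) * (y + v)) < 1 := by
    refine lt_of_le_of_lt (mul_le_mul_of_nonneg_left ?_ (by linarith)) h
    have hxu := mul_nonneg (sub_nonneg.2 ha1) (mul_nonneg hx hu)
    have hyv := mul_nonneg (sub_nonneg.2 ha1) (mul_nonneg hy hv)
    apply mul_le_mul <;> nlinarith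
  have hw16 : 16 * b ^ 2 * (x * y * u * v) < 1 := by
    have hxu : 4 * (x * u) ≤ (x + u) ^ 2 := by nlinarith [sq_nonneg (x - u)]
    have hyv : 4 * (y * v) ≤ (y + v) ^ 2 := by nlinarith [sq_nonneg (y - v)]
    have hprod := mul_le_mul hxu hyv (by positivity) (sq_nonneg _)
    have hsq : (b * ((x + u) * (y + v))) ^ 2 < 1 := by
      have : 0 ≤ b * ((x + u) * (y + v)) := by positivity
      nlinarith
    nlinarith [sq_nonneg b]
  have hk : (a - 1) * (b - 1) ≤ 8 * b := by nlinarith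
  rw [← pow_le_pow_iff_left₀ (by positivity) hs two_ne_zero]
  calc ((a - 1) * (b - 1) * (x * y * u * v)) ^ 2 ≤ (8 * b * (x * y * u * v)) ^ 2 := by
        gcongr
    _ = 4 * (x * y * u * v) * (16 * b ^ 2 * (x * y * u * v)) := by ring
    _ ≤ 4 * (x * y * u * v) := mul_le_of_le_one_right (by positivity) hw16.le
    _ ≤ (y * u + x * v) ^ 2 := by nlinarith [sq_nonneg (y * u - x * v)]

lemma swRaw_interchange_le {a b x y u v : ℝ} (ha0 : 0 ≤ a) (ha9 : a ≤ 9) (hab : a ≤ b)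
    (hx : x ∈ Icc (0:ℝ) 1) (hy : y ∈ Icc (0:ℝ) 1) (hu : u ∈ Icc (0:ℝ) 1) (hv : v ∈ Icc (0:ℝ) 1)
    (hq : 0 ≤ swRaw a y v)
    (hpos : 0 < swRaw b (swRaw a x u) (swRaw a y v)) :
    swRaw b (swRaw a x u) (swRaw a y v) ≤ swRaw a (swRaw b x y) (swRaw b u v) := by
  rw [← sub_nonneg, swRaw_interchange]
  refine mul_nonneg (sub_nonneg.2 hab) (sub_nonneg.2 ?_)
  have hx' := Icc.one_sub_mem hx
  have hy' := Icc.one_sub_mem hy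
  have hu' := Icc.one_sub_mem hu
  have hv' := Icc.one_sub_mem hv
  rcases le_or_gt a 1 with ha1 | ha1
  · refine mul_prod_le_add_of_le_one ?_ hx' hy' hu' hv'.1
    rcases le_or_gt b 1 with hb1 | hb1 <;> nlinarith
  · refine mul_prod_le_add_of_mul_lt_one ha1.le ha9 hx'.1 hy'.1 hu'.1 hv'.1 ?_
    rw [← one_sub_swRaw, ← one_sub_swRaw]
    have hp1 : swRaw a x u ≤ 1 := (swRaw_le_mul ha0 hx.2 hu.2).trans (mul_le_one₀ hx.2 hu.1 hu.2)
    have hq1 : swRaw a y v ≤ 1 := (swRaw_le_mul ha0 hy.2 hv.2).trans (mul_le_one₀ hy.2 hv.1 hv.2)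
    have hpq := mul_le_one₀ hp1 hq hq1
    rw [swRaw_eq_mul_sub] at hpos
    linarith

lemma TSW_eq_swRaw_of_pos {l u v : ℝ} (h : 0 < TSW l u v) : TSW l u v = swRaw l u v :=
  max_eq_right ((lt_max_iff.1 h).resolve_left (lt_irrefl 0)).le

lemma TSW_le_left {l u v : ℝ} (hl : 0 ≤ l) (hu : u ∈ Icc (0:ℝ) 1) (hv : v ∈ Icc (0:ℝ) 1) :
    TSW l u v ≤ u :=
  max_le hu.1 ((swRaw_le_mul hl hu.2 hv.2).trans (mul_le_of_le_one_right hu.1 hv.2))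

lemma TSW_le_right {l u v : ℝ} (hl : 0 ≤ l) (hu : u ∈ Icc (0:ℝ) 1) (hv : v ∈ Icc (0:ℝ) 1) :
    TSW l u v ≤ v :=
  TSW_comm l u v ▸ TSW_le_left hl hv hu

lemma TSW_le_TSW {l u v u' v' : ℝ} (hl : 0 ≤ l) (huu' : u ≤ u') (hvv' : v ≤ v')
    (hu' : u' ∈ Icc (0:ℝ) 1) (hv : v ∈ Icc (0:ℝ) 1) :
    TSW l u v ≤ TSW l u' v' := by
  refine max_le_max_left 0 ?_
  have hu'l : 0 ≤ u' + l * (1 - u') := by nlinarith [hu'.1, hu'.2]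
  have hvl : 0 ≤ v + l * (1 - v) := by nlinarith [hv.1, hv.2]
  nlinarith [mul_nonneg (sub_nonneg.2 hvv') hu'l, mul_nonneg (sub_nonneg.2 huu') hvl]

lemma pos_of_TSW_pos {l u v : ℝ} (hl : 0 ≤ l) (hv : v ∈ Icc (0:ℝ) 1) (h : 0 < TSW l u v) :
    0 < u := by
  by_contra! hu
  have hraw : 0 < swRaw l u v := by simpa [TSW_eq_max_swRaw] using h
  rw [swRaw_eq_mul_sub] at hraw
  nlinarith [mul_nonneg hl (mul_nonneg (by linarith : 0 ≤ 1 - u) (sub_nonneg.2 hv.2)), hv.1]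

lemma pos_of_TSW_TSW_pos {l l' x y u v : ℝ} (hl : 0 ≤ l) (hl' : 0 ≤ l')
    (hx : x ∈ Icc (0:ℝ) 1) (hy : y ∈ Icc (0:ℝ) 1) (hu : u ∈ Icc (0:ℝ) 1) (hv : v ∈ Icc (0:ℝ) 1)
    (h : 0 < TSW l' (TSW l x u) (TSW l y v)) :
    0 < TSW l x u ∧ 0 < TSW l y v ∧ 0 < TSW l' x y ∧ 0 < TSW l' u v := by
  have hp : TSW l x u ∈ Icc (0:ℝ) 1 := ⟨le_max_left _ _, (TSW_le_left hl hx hu).trans hx.2⟩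
  have hq : TSW l y v ∈ Icc (0:ℝ) 1 := ⟨le_max_left _ _, (TSW_le_left hl hy hv).trans hy.2⟩
  refine ⟨pos_of_TSW_pos hl' hq h, pos_of_TSW_pos hl' hp (TSW_comm l' _ _ ▸ h), ?_, ?_⟩
  · exact h.trans_le (TSW_le_TSW hl' (TSW_le_left hl hx hu) (TSW_le_left hl hy hv) hx hq)
  · exact h.trans_le (TSW_le_TSW hl' (TSW_le_right hl hx hu) (TSW_le_right hl hy hv) hu hq)

theorem sugeno_weber_dominance_of_small_param (a b : ℝ) (ha0 : 0 < a) (ha9 : a ≤ 9)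
    (hab : a ≤ b) : Dominates (TSW a) (TSW b) := by
  intro x y u v hx hy hu hv
  have hb : 0 ≤ b := ha0.le.trans hab
  rcases le_or_gt (TSW b (TSW a x u) (TSW a y v)) 0 with hzero | hpos
  · exact hzero.trans (le_max_left _ _)
  obtain ⟨hp, hq, hs, ht⟩ := pos_of_TSW_TSW_pos ha0.le hb hx hy hu hv hpos
  have hp_eq := TSW_eq_swRaw_of_pos hp
  have hq_eq := TSW_eq_swRaw_of_pos hq
  have hraw : 0 < swRaw b (swRaw a x u) (swRaw a y v) := by
    rwa [← hp_eq, ← hq_eq, ← TSW_eq_swRaw_of_pos hpos]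
  calc TSW b (TSW a x u) (TSW a y v) = swRaw b (swRaw a x u) (swRaw a y v) := by
        rw [TSW_eq_swRaw_of_pos hpos, hp_eq, hq_eq]
    _ ≤ swRaw a (swRaw b x y) (swRaw b u v) :=
        swRaw_interchange_le ha0.le ha9 hab hx hy hu hv (hq_eq ▸ hq.le) hraw
    _ = swRaw a (TSW b x y) (TSW b u v) := by
        rw [TSW_eq_swRaw_of_pos hs, TSW_eq_swRaw_of_pos ht]
    _ ≤ TSW a (TSW b x y) (TSW b u v) := le_max_right _ _
end

section
/- For all real α₁, α₂ with 17 + 12√2 ≤ α₁ < ∞ and 17 + 12√2 ≤ α₂ < ∞, if the Sugeno-Weber t-norm T_{α₁} dominates T_{α₂}, then α₁ = α₂. -/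
open Set

/-!
Writing `T_a(u, v) = max 0 (u v - a (1 - u) (1 - v))`, the diagonal of `T_a` is the positive part
of `δ_a(x) = x² - a (1 - x)²`, which vanishes at `x = √a / (1 + √a)`.

Testing dominance at `(t, 1, 1, t)` with `t` the zero of `δ_{a₁}` gives `δ_{a₂}(t) ≤ 0`, i.e.
`a₁ ≤ a₂`. For `a₁ < a₂`, test it on the diagonal `x = 1 - s`: since
`δ_{a₂}(δ_{a₁}(x)) - δ_{a₁}(δ_{a₂}(x)) = (a₂ - a₁) s² ((a₁ - 1)(a₂ - 1) s² - 2)`,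
dominance fails as soon as `s` is large enough for the last factor to be positive but small
enough for `δ_{a₂}(δ_{a₁}(x))` to be positive. Such an `s` exists once
`8 (a₂ - 1) < (a₁ - 1) (√a₂ - 3)²`; for `a₂ > a₁` this follows from `(√a₁ - 3)² ≥ 8`, which is
where the threshold `17 + 12√2 = (3 + 2√2)²` comes from.
-/

namespace SugenoWeber

open Filter Topology

def diag (a x : ℝ) : ℝ := x ^ 2 - a * (1 - x) ^ 2

def DiagWitness (a₁ a₂ s : ℝ) : Prop :=
  0 < s ∧ 2 < (a₁ - 1) * (a₂ - 1) * s ^ 2 ∧ (1 + √a₂) * (s * (2 + (a₁ - 1) * s)) < 1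

theorem TSW_eq (a u v : ℝ) : TSW a u v = max 0 (u * v - a * (1 - u) * (1 - v)) := by
  unfold TSW; ring_nf

theorem TSW_self (a x : ℝ) : TSW a x x = max 0 (diag a x) := by
  rw [TSW_eq, diag]; ring_nf

theorem TSW_one_left (a : ℝ) {t : ℝ} (ht : 0 ≤ t) : TSW a 1 t = t := by
  rw [TSW_eq]; simpa using ht

theorem TSW_one_right (a : ℝ) {t : ℝ} (ht : 0 ≤ t) : TSW a t 1 = t := by
  rw [TSW_eq]; simpa using ht

theorem diag_eq_mul {a : ℝ} (ha : 0 ≤ a) (x : ℝ) :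
    diag a x = (x - √a * (1 - x)) * (x + √a * (1 - x)) := by
  rw [diag]; linear_combination (1 - x) ^ 2 * Real.sq_sqrt ha

theorem diag_diag_sub_diag_diag (a₁ a₂ x : ℝ) :
    diag a₂ (diag a₁ x) - diag a₁ (diag a₂ x)
      = (a₂ - a₁) * (1 - x) ^ 2 * ((a₁ - 1) * (a₂ - 1) * (1 - x) ^ 2 - 2) := by
  simp only [diag]; ring

theorem le_of_dominates {a₁ a₂ : ℝ} (ha₁ : 0 ≤ a₁) (hdom : Dominates (TSW a₁) (TSW a₂)) :
    a₁ ≤ a₂ := by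
  set t := √a₁ / (1 + √a₁)
  have hr : 0 < 1 + √a₁ := by positivity
  have ht0 : 0 ≤ t := by positivity
  have h1t0 : 0 < 1 - t := by rw [sub_pos, div_lt_one hr]; linarith
  have hzero : t = √a₁ * (1 - t) := by simp only [t]; field_simp; ring
  have ht : t ∈ Icc (0 : ℝ) 1 := ⟨ht0, by linarith⟩
  have hone : (1 : ℝ) ∈ Icc (0 : ℝ) 1 := ⟨zero_le_one, le_rfl⟩
  have hd := hdom t 1 1 t ht hone hone ht
  simp only [TSW_one_left _ ht0, TSW_one_right _ ht0, TSW_self] at hd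
  rw [diag_eq_mul ha₁ t, ← hzero, sub_self, zero_mul, max_self] at hd
  have hdiag : diag a₂ t = (a₁ - a₂) * (1 - t) ^ 2 := by
    rw [diag]; linear_combination (t + √a₁ * (1 - t)) * hzero + (1 - t) ^ 2 * Real.sq_sqrt ha₁
  have : (a₁ - a₂) * (1 - t) ^ 2 ≤ 0 := hdiag ▸ (le_max_right _ _).trans hd
  nlinarith [pow_pos h1t0 2]

/-- At `c = 3 + 2√2` the inequality degenerates to `(c - 3)² = 8`; the ratio
`(m - 3)² / (m² - 1)` is increasing for `m > 3`. -/
theorem eight_mul_sq_sub_one_lt {c m : ℝ} (hc : 3 + 2 * √2 ≤ c) (hcm : c < m) :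
    8 * (m ^ 2 - 1) < (c ^ 2 - 1) * (m - 3) ^ 2 := by
  have hw : √2 ^ 2 = 2 := Real.sq_sqrt zero_le_two
  have hw0 : 1 < √2 := by nlinarith [Real.sqrt_nonneg 2]
  have hc8 : 8 ≤ (c - 3) ^ 2 := by nlinarith
  have hmono : (c - 3) ^ 2 * (m ^ 2 - 1) < (c ^ 2 - 1) * (m - 3) ^ 2 := by
    have : 0 < (m - c) * (3 * m * c - 5 * m - 5 * c + 3) := by
      apply mul_pos (by linarith); nlinarith
    nlinarith
  nlinarith

theorem exists_diagWitness {a₁ a₂ : ℝ} (h₁ : 17 + 12 * √2 ≤ a₁) (h : a₁ < a₂) :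
    ∃ s, DiagWitness a₁ a₂ s := by
  have hw : 0 ≤ √2 := Real.sqrt_nonneg 2
  have hc : 3 + 2 * √2 ≤ √a₁ := by
    rw [Real.le_sqrt (by positivity) (by linarith)]
    nlinarith [Real.sq_sqrt zero_le_two]
  have hcm : √a₁ < √a₂ := Real.sqrt_lt_sqrt (by linarith) h
  have hc2 : √a₁ ^ 2 = a₁ := Real.sq_sqrt (by linarith)
  have hm2 : √a₂ ^ 2 = a₂ := Real.sq_sqrt (by linarith)
  have hP : 0 < a₁ - 1 := by nlinarith
  have hQ : 0 < a₂ - 1 := by linarith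
  set m := √a₂
  set g : ℝ → ℝ := fun s => (1 + m) * (s * (2 + (a₁ - 1) * s))
  set s₀ := √(2 / ((a₁ - 1) * (a₂ - 1)))
  have hs₀ : 0 < s₀ := Real.sqrt_pos.mpr (by positivity)
  have hs₀2 : (a₁ - 1) * (a₂ - 1) * s₀ ^ 2 = 2 := by
    rw [Real.sq_sqrt (by positivity)]; field_simp
  have hkey : 2 * (a₂ - 1) * s₀ < m - 3 := by
    have hsq : (a₁ - 1) * (2 * (a₂ - 1) * s₀) ^ 2 < (a₁ - 1) * (m - 3) ^ 2 := by
      calc (a₁ - 1) * (2 * (a₂ - 1) * s₀) ^ 2 = 8 * (m ^ 2 - 1) := by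
            rw [hm2]; linear_combination 4 * (a₂ - 1) * hs₀2
        _ < (√a₁ ^ 2 - 1) * (m - 3) ^ 2 := eight_mul_sq_sub_one_lt hc hcm
        _ = (a₁ - 1) * (m - 3) ^ 2 := by rw [hc2]
    exact lt_of_pow_lt_pow_left₀ 2 (by linarith) (lt_of_mul_lt_mul_left hsq hP.le)
  have hg₀ : g s₀ < 1 := by
    have : g s₀ * (m - 1) = 2 * (a₂ - 1) * s₀ + 2 := by
      simp only [g]; linear_combination (2 * s₀ + (a₁ - 1) * s₀ ^ 2) * hm2 + hs₀2
    nlinarith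
  have hev : ∀ᶠ s in 𝓝[>] s₀, g s < 1 :=
    nhdsWithin_le_nhds <| (by fun_prop : Continuous g).continuousAt.eventually_lt
      continuousAt_const hg₀
  obtain ⟨s, hgs, hs : s₀ < s⟩ := (hev.and self_mem_nhdsWithin).exists
  refine ⟨s, hs₀.trans hs, ?_, hgs⟩
  rw [← hs₀2]
  gcongr

theorem not_dominates_of_diagWitness {a₁ a₂ s : ℝ} (ha₁ : 1 ≤ a₁) (h : a₁ < a₂)
    (hw : DiagWitness a₁ a₂ s) : ¬ Dominates (TSW a₁) (TSW a₂) := by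
  intro hdom
  obtain ⟨hs, hs₂, hg⟩ := hw
  set m := √a₂
  have hm : 0 ≤ m := Real.sqrt_nonneg _
  have ha₂ : 0 ≤ a₂ := by linarith
  set x := 1 - s
  set A := diag a₁ x
  set B := diag a₂ x
  have h1A : 1 - A = s * (2 + (a₁ - 1) * s) := by simp only [A, x, diag]; ring
  have h1A0 : 0 ≤ 1 - A := by rw [h1A]; exact mul_nonneg hs.le (by nlinarith)
  have hms : (1 + m) * s < 1 := by
    nlinarith [mul_nonneg hm hs.le, mul_nonneg (sub_nonneg.2 ha₁) hs.le]
  have hx : x ∈ Icc (0 : ℝ) 1 := ⟨by nlinarith, by linarith⟩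
  have hB : 0 ≤ B := by
    rw [show B = _ from diag_eq_mul ha₂ x]
    exact mul_nonneg (by simp only [x]; linarith) (by simp only [x]; nlinarith)
  have hBA : B ≤ A := by
    have : A - B = (a₂ - a₁) * s ^ 2 := by simp only [A, B, x, diag]; ring
    nlinarith [sq_nonneg s]
  have hAA : 0 < diag a₂ A := by
    have hlt : m * (1 - A) < A := by nlinarith
    rw [diag_eq_mul ha₂]
    exact mul_pos (by linarith) (by nlinarith [mul_nonneg hm h1A0])
  have hBB : diag a₁ B < diag a₂ A := by
    have := diag_diag_sub_diag_diag a₁ a₂ x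
    have hpos : 0 < (a₂ - a₁) * (1 - x) ^ 2 * ((a₁ - 1) * (a₂ - 1) * (1 - x) ^ 2 - 2) := by
      simp only [x, sub_sub_cancel]
      exact mul_pos (mul_pos (by linarith) (by positivity)) (by linarith)
    linarith
  have hd := hdom x x x x hx hx hx hx
  rw [TSW_self a₂ x, max_eq_right hB, TSW_self a₁ x, max_eq_right (hB.trans hBA), TSW_self,
    TSW_self, max_eq_right hAA.le] at hd
  exact (max_lt hAA hBB).not_ge hd

end SugenoWeber

open SugenoWeber in
theorem sugeno_weber_no_dominance_of_large_params_general (a₁ a₂ : ℝ)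
    (h₁ : 17 + 12 * Real.sqrt 2 ≤ a₁)
    (hdom : Dominates (TSW a₁) (TSW a₂)) : a₁ = a₂ := by
  have ha₁ : 1 ≤ a₁ := le_trans (by nlinarith [Real.sqrt_nonneg 2]) h₁
  refine (le_of_dominates (by linarith) hdom).eq_or_lt.resolve_right fun h => ?_
  obtain ⟨s, hs⟩ := exists_diagWitness h₁ h
  exact not_dominates_of_diagWitness ha₁ h hs hdom

theorem sugeno_weber_no_dominance_of_large_params (a₁ a₂ : ℝ)
    (h₁ : 17 + 12 * Real.sqrt 2 ≤ a₁) (h₂ : 17 + 12 * Real.sqrt 2 ≤ a₂)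
    (hdom : Dominates (TSW a₁) (TSW a₂)) : a₁ = a₂ :=
  sugeno_weber_no_dominance_of_large_params_general a₁ a₂ h₁ hdom
end

section
/- Let 0 < λ < μ < ∞ and 0 < x < 1, 0 < y < 1, 0 < u < 1, 0 < v < 1 be real numbers, and set X₁ = (1−λ)ux + λ(u+x−1), X₂ = (1−λ)vy + λ(v+y−1), X₃ = (1−μ)uv + μ(u+v−1), X₄ = (1−μ)xy + μ(x+y−1). If (1−μ)X₁X₂ + μ(X₁+X₂−1) > 0, then X₁ > 0, X₂ > 0, X₃ > 0 and X₄ > 0. -/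
/-!
Write `T_c(s, t) = (1 - c) s t + c (s + t - 1) = s t - c (1 - s) (1 - t)`, so that
`X₁ = T_λ(u, x)`, `X₂ = T_λ(v, y)`, `X₃ = T_μ(u, v)`, `X₄ = T_μ(x, y)` and the hypothesis is
`T_μ(X₁, X₂) > 0`. For `s, t < 1`, `T_c(s, t) > 0` says exactly `c < o(s) o(t)`, where
`o(s) = s / (1 - s)` are the odds, strictly increasing on `(-∞, 1)`.

Since `-λ < X₁ < min(u, x)` and `-λ < X₂ < min(v, y)`, the hypothesis reads `μ < o(X₁) o(X₂)`.
Were `X₁, X₂` both non-positive, their odds would lie in `(-λ/(1+λ), 0]`, forcing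
`o(X₁) o(X₂) < λ < μ`; so `X₁, X₂ > 0`, and monotonicity of the odds then gives
`μ < o(u) o(v)` and `μ < o(x) o(y)`, i.e. `X₃, X₄ > 0`.
-/

open Set

noncomputable section

def twistedMul (c s t : ℝ) : ℝ := (1 - c) * s * t + c * (s + t - 1)

def odds (s : ℝ) : ℝ := s / (1 - s)

end

section

variable {c m s t s' t' : ℝ}

theorem twistedMul_eq_mul_sub (c s t : ℝ) :
    twistedMul c s t = s * t - c * ((1 - s) * (1 - t)) := by
  unfold twistedMul
  ring

theorem twistedMul_le_mul (hc : 0 ≤ c) (hs1 : s ≤ 1) (ht1 : t ≤ 1) :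
    twistedMul c s t ≤ s * t := by
  rw [twistedMul_eq_mul_sub]
  have : 0 ≤ c * ((1 - s) * (1 - t)) :=
    mul_nonneg hc (mul_nonneg (sub_nonneg.2 hs1) (sub_nonneg.2 ht1))
  linarith

theorem twistedMul_lt_left (hc : 0 ≤ c) (hs : 0 < s) (hs1 : s ≤ 1) (ht1 : t < 1) :
    twistedMul c s t < s :=
  (twistedMul_le_mul hc hs1 ht1.le).trans_lt (mul_lt_of_lt_one_right hs ht1)

theorem twistedMul_lt_right (hc : 0 ≤ c) (ht : 0 < t) (hs1 : s < 1) (ht1 : t ≤ 1) :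
    twistedMul c s t < t :=
  (twistedMul_le_mul hc hs1.le ht1).trans_lt (mul_lt_of_lt_one_left ht hs1)

theorem neg_lt_twistedMul (hc : 0 < c) (hs : 0 < s) (ht : 0 < t) (ht1 : t < 1) :
    -c < twistedMul c s t := by
  rw [twistedMul_eq_mul_sub]
  have : (1 - s) * (1 - t) < 1 := by nlinarith
  nlinarith [mul_pos hs ht]

theorem odds_strictMonoOn : StrictMonoOn odds (Iio 1) := by
  intro a ha b hb hab
  rw [mem_Iio] at ha hb
  rw [odds, odds, div_lt_div_iff₀ (sub_pos.2 ha) (sub_pos.2 hb)]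
  nlinarith

theorem odds_pos_iff (hs1 : s < 1) : 0 < odds s ↔ 0 < s :=
  div_pos_iff_of_pos_right (sub_pos.2 hs1)

theorem odds_neg (c : ℝ) : odds (-c) = -(c / (1 + c)) := by
  rw [odds, sub_neg_eq_add, neg_div]

theorem twistedMul_pos_iff (hs1 : s < 1) (ht1 : t < 1) :
    0 < twistedMul c s t ↔ c < odds s * odds t := by
  have hd : 0 < (1 - s) * (1 - t) := mul_pos (sub_pos.2 hs1) (sub_pos.2 ht1)
  rw [twistedMul_eq_mul_sub, sub_pos, odds, odds, div_mul_div_comm, lt_div_iff₀ hd]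

theorem twistedMul_pos_of_le (hs : 0 < s) (hss' : s ≤ s') (hs'1 : s' < 1)
    (ht : 0 < t) (htt' : t ≤ t') (ht'1 : t' < 1) (h : 0 < twistedMul c s t) :
    0 < twistedMul c s' t' := by
  have hs1 := hss'.trans_lt hs'1
  have ht1 := htt'.trans_lt ht'1
  rw [twistedMul_pos_iff hs1 ht1] at h
  rw [twistedMul_pos_iff hs'1 ht'1]
  refine h.trans_le (mul_le_mul ?_ ?_ ((odds_pos_iff ht1).2 ht).le
    ((odds_pos_iff hs'1).2 (hs.trans_le hss')).le)
  · exact odds_strictMonoOn.monotoneOn hs1 hs'1 hss'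
  · exact odds_strictMonoOn.monotoneOn ht1 ht'1 htt'

theorem pos_and_pos_of_twistedMul_pos (hc : 0 < c) (hcm : c ≤ m)
    (hs : -c < s) (hs1 : s < 1) (ht : -c < t) (ht1 : t < 1) (h : 0 < twistedMul m s t) :
    0 < s ∧ 0 < t := by
  rw [twistedMul_pos_iff hs1 ht1] at h
  rw [← odds_pos_iff hs1, ← odds_pos_iff ht1]
  have odds_gt : ∀ r, -c < r → r < 1 → -(c / (1 + c)) < odds r := fun r hr hr1 => by
    rw [← odds_neg]
    exact odds_strictMonoOn (mem_Iio.2 (by linarith)) hr1 hr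
  have ha0 : 0 < c / (1 + c) := by positivity
  have ha1 : c / (1 + c) < 1 := (div_lt_one (by linarith)).2 (by linarith)
  have hac : c / (1 + c) ≤ c := div_le_self hc.le (by linarith)
  rcases mul_pos_iff.1 ((hc.trans_le hcm).trans h) with hpos | ⟨hs', ht'⟩
  · exact hpos
  · nlinarith [odds_gt s hs hs1, odds_gt t ht ht1, mul_lt_mul_of_pos_left ha1 ha0]

end

theorem Xi_pos_of_B_pos (l m x y u v X₁ X₂ X₃ X₄ : ℝ)
    (hl : 0 < l) (hlm : l < m)
    (hx : 0 < x) (hx1 : x < 1) (hy : 0 < y) (hy1 : y < 1)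
    (hu : 0 < u) (hu1 : u < 1) (hv : 0 < v) (hv1 : v < 1)
    (hX₁ : X₁ = (1 - l) * u * x + l * (u + x - 1))
    (hX₂ : X₂ = (1 - l) * v * y + l * (v + y - 1))
    (hX₃ : X₃ = (1 - m) * u * v + m * (u + v - 1))
    (hX₄ : X₄ = (1 - m) * x * y + m * (x + y - 1))
    (hB : (1 - m) * X₁ * X₂ + m * (X₁ + X₂ - 1) > 0) :
    X₁ > 0 ∧ X₂ > 0 ∧ X₃ > 0 ∧ X₄ > 0 := by
  change X₁ = twistedMul l u x at hX₁
  change X₂ = twistedMul l v y at hX₂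
  change 0 < twistedMul m X₁ X₂ at hB
  subst hX₁ hX₂ hX₃ hX₄
  have hX₁u := twistedMul_lt_left hl.le hu hu1.le hx1
  have hX₁x := twistedMul_lt_right hl.le hx hu1 hx1.le
  have hX₂v := twistedMul_lt_left hl.le hv hv1.le hy1
  have hX₂y := twistedMul_lt_right hl.le hy hv1 hy1.le
  obtain ⟨hX₁, hX₂⟩ := pos_and_pos_of_twistedMul_pos hl hlm.le
    (neg_lt_twistedMul hl hu hx hx1) (hX₁u.trans hu1)
    (neg_lt_twistedMul hl hv hy hy1) (hX₂v.trans hv1) hB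
  exact ⟨hX₁, hX₂, twistedMul_pos_of_le hX₁ hX₁u.le hu1 hX₂ hX₂v.le hv1 hB,
    twistedMul_pos_of_le hX₁ hX₁x.le hx1 hX₂ hX₂y.le hy1 hB⟩
end

section
/- Let λ, μ, x, y, u, ṽ be real numbers with 0 < λ < 1, λ < μ, 0 < x < 1, 0 < y < 1, 0 < u < 1, and y < ṽ < 1 + λy. Then ṽ·x·(1 − (λ−1)(μ−1)uy) + y·((λ−1)uy((μ−1)x + 1) + u − x) ≥ 0. -/
/-! The expression equals `x (1 - c) (w - y) + u y (1 - (1 - l) y)` with `c = (l - 1)(m - 1) u y`,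
an affine function of `w`. It is therefore enough to check it at the endpoints `w = y` and
`w = 1 + l y` of the admissible range, where it takes the values `u y (1 - (1 - l) y)` and
`(1 - (1 - l) y) (x + u y (1 - (l - 1)(m - 1) x))`; both are nonnegative because
`(1 - l) y < 1` and `(l - 1)(m - 1) < 1`. -/

theorem add_mul_sub_nonneg_of_le_of_le {α : Type*} [Ring α] [LinearOrder α] [IsOrderedRing α]
    {a b y z w : α} (hb : 0 ≤ b) (hz : 0 ≤ a * (z - y) + b) (hyw : y ≤ w) (hwz : w ≤ z) :
    0 ≤ a * (w - y) + b := by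
  rcases le_total 0 a with ha | ha
  · exact add_nonneg (mul_nonneg ha (sub_nonneg.2 hyw)) hb
  · exact hz.trans (add_le_add_left (mul_le_mul_of_nonpos_left (sub_le_sub_right hwz y) ha) b)

theorem sub_one_mul_sub_one_lt_one {l m : ℝ} (hl : 0 < l) (hl1 : l < 1) (hlm : l < m) :
    (l - 1) * (m - 1) < 1 := by
  rcases le_or_gt 1 m with hm | hm
  · nlinarith
  · nlinarith [mul_lt_mul_of_pos_right (by linarith : 1 - m < 1) (by linarith : 0 < 1 - l)]

theorem second_inequality_of_small_lambda_general (l m x y u w : ℝ)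
    (hl : 0 < l) (hl1 : l < 1) (hlm : l < m)
    (hx : 0 < x) (hx1 : x < 1) (hy : 0 < y) (hy1 : y < 1)
    (hu : 0 < u) (hw : y < w) (hw1 : w < 1 + l * y) :
    w * x * (1 - (l - 1) * (m - 1) * u * y)
      + y * ((l - 1) * u * y * ((m - 1) * x + 1) + u - x) ≥ 0 := by
  have hkx : (l - 1) * (m - 1) * x < 1 := by
    have hk := sub_one_mul_sub_one_lt_one hl hl1 hlm
    rcases le_total 0 ((l - 1) * (m - 1)) with h | h
    · exact (mul_le_of_le_one_right h hx1.le).trans_lt hk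
    · exact (mul_nonpos_of_nonpos_of_nonneg h hx.le).trans_lt one_pos
  have hly : 0 < 1 - (1 - l) * y :=
    sub_pos.2 (mul_lt_one_of_nonneg_of_lt_one_left (by linarith) (by linarith) hy1.le)
  have affine : w * x * (1 - (l - 1) * (m - 1) * u * y)
      + y * ((l - 1) * u * y * ((m - 1) * x + 1) + u - x)
      = x * (1 - (l - 1) * (m - 1) * u * y) * (w - y) + u * y * (1 - (1 - l) * y) := by ring
  have at_upper : x * (1 - (l - 1) * (m - 1) * u * y) * (1 + l * y - y) + u * y * (1 - (1 - l) * y)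
      = (1 - (1 - l) * y) * (x + u * y * (1 - (l - 1) * (m - 1) * x)) := by ring
  rw [ge_iff_le, affine]
  refine add_mul_sub_nonneg_of_le_of_le (by positivity) ?_ hw.le hw1.le
  rw [at_upper]
  have := sub_pos.2 hkx
  positivity

theorem second_inequality_of_small_lambda (l m x y u w : ℝ)
    (hl : 0 < l) (hl1 : l < 1) (hlm : l < m)
    (hx : 0 < x) (hx1 : x < 1) (hy : 0 < y) (hy1 : y < 1)
    (hu : 0 < u) (hu1 : u < 1) (hw : y < w) (hw1 : w < 1 + l * y) :
    w * x * (1 - (l - 1) * (m - 1) * u * y)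
      + y * ((l - 1) * u * y * ((m - 1) * x + 1) + u - x) ≥ 0 :=
  second_inequality_of_small_lambda_general l m x y u w hl hl1 hlm hx hx1 hy hy1 hu hw hw1
end
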